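/- Let n ≥ 1 and p > 0. Let v be a smooth probability density on ℝⁿ with finite positive second moment E(v) = ∫|x|² v dx, finite ∫ v^p dx > 0, and finite generalized Fisher information I_p(v). Then I_p(v) − n² (∫ v^p dx)/E(v) ≥ 0; equivalently, ∫_{{v>0}} |∇(v^p)|²/v dx ≥ n² (∫ v^p dx)² / ∫ |x|² v dx. -/

import Mathlib

open MeasureTheory Real Filter
open scoped Topology
open scoped NNReal

noncomputable section

/-- The generalized Fisher information of order `p`:
`I_p(f) = (∫ f^p)⁻¹ ∫_{f>0} |∇(f^p)|²/f`. -/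
def fisherp (n : ℕ) (p : ℝ) (f : EuclideanSpace ℝ (Fin n) → ℝ) : ℝ :=
  (∫ x, f x ^ p)⁻¹ * ∫ x in {x | 0 < f x}, ‖gradient (fun y => f y ^ p) x‖ ^ 2 / f x

-- L0
lemma limit_zero_of_integrable_atTop {g : ℝ → ℝ} {L : ℝ}
    (hg : Integrable g) (h : Tendsto (fun t => t * g t) atTop (𝓝 L)) : L = 0 := by
  by_contra hL
  have hev : ∀ᶠ t in atTop, |L| / 2 ≤ |t * g t| := by
    have := h.norm
    have h2 : ∀ᶠ t in atTop, ‖t * g t‖ ∈ Set.Ioi (|L| - |L|/2) := by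
      refine this.eventually ?_
      refine Ioi_mem_nhds ?_
      have h0 : 0 < |L| := abs_pos.2 hL
      rw [Real.norm_eq_abs]
      linarith
    filter_upwards [h2] with t ht
    have : |L| - |L|/2 < |t * g t| := ht
    linarith
  obtain ⟨T, hT⟩ := (hev.and (eventually_ge_atTop (1:ℝ))).exists_forall_of_atTop
  set T' := max T 1 with hT'
  have hT'1 : (1:ℝ) ≤ T' := le_max_right _ _
  have hT'0 : (0:ℝ) < T' := lt_of_lt_of_le one_pos hT'1
  have key : IntegrableOn (fun t : ℝ => |L|/2 * t⁻¹) (Set.Ioi T') := by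
    refine Integrable.mono' (hg.norm.integrableOn) ?_ ?_
    · exact (measurable_const.mul measurable_inv).aestronglyMeasurable
    · refine (ae_restrict_iff' measurableSet_Ioi).2 (Filter.Eventually.of_forall ?_)
      intro t ht
      have ht0 : 0 < t := lt_trans hT'0 ht
      have h1 := (hT t (le_of_lt (lt_of_le_of_lt (le_max_left T 1) ht))).1
      have : |L|/2 ≤ |t| * |g t| := by rwa [abs_mul] at h1
      rw [abs_of_pos ht0] at this
      have : |L|/2 * t⁻¹ ≤ |g t| := by
        rw [mul_inv_le_iff₀ ht0]; linarith [this]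
      have hnn : 0 ≤ |L|/2 * t⁻¹ := by positivity
      calc ‖|L|/2 * t⁻¹‖ = |L|/2 * t⁻¹ := by rw [Real.norm_eq_abs, abs_of_nonneg hnn]
        _ ≤ |g t| := this
        _ = ‖g t‖ := (Real.norm_eq_abs (g t)).symm
  have : IntegrableOn (fun t : ℝ => t⁻¹) (Set.Ioi T') := by
    have h2 : (fun t : ℝ => t⁻¹) = fun t => (|L|/2)⁻¹ * (|L|/2 * t⁻¹) := by
      funext t
      have hL2 : |L|/2 ≠ 0 := by positivity
      rw [← mul_assoc, inv_mul_cancel₀ hL2, one_mul]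
    rw [h2]
    exact key.const_mul _
  have hiff := integrableOn_Ioi_rpow_iff hT'0 (s := (-1:ℝ))
  rw [show (fun t : ℝ => t ^ (-1:ℝ)) = fun t : ℝ => t⁻¹ from funext fun t => Real.rpow_neg_one t] at hiff
  have := hiff.1 this
  linarith

lemma integral_add_mul_deriv_eq_zero {g g' : ℝ → ℝ}
    (hd : ∀ t, HasDerivAt g (g' t) t)
    (hg : Integrable g) (hg' : Integrable (fun t => t * g' t)) :
    ∫ t, (g t + t * g' t) = 0 := by
  set h' : ℝ → ℝ := fun t => g t + t * g' t with hh'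
  have hint : Integrable h' := hg.add hg'
  have hh : ∀ t, HasDerivAt (fun s => s * g s) (h' t) t := by
    intro t
    have := (hasDerivAt_id t).fun_mul (hd t)
    simpa [hh'] using this
  have hsub : ∀ b : ℝ, ∫ t in (0:ℝ)..b, h' t = b * g b := by
    intro b
    rw [intervalIntegral.integral_eq_sub_of_hasDerivAt (fun t _ => hh t)
      hint.intervalIntegrable]
    simp
  -- top side
  have htop : Tendsto (fun b : ℝ => b * g b) atTop (𝓝 (∫ t in Set.Ioi (0:ℝ), h' t)) := by
    have := intervalIntegral_tendsto_integral_Ioi (0:ℝ) hint.integrableOn tendsto_id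
    simpa [hsub] using this
  have htop0 : (∫ t in Set.Ioi (0:ℝ), h' t) = 0 :=
    limit_zero_of_integrable_atTop hg htop
  -- bottom side
  have hbot : Tendsto (fun b : ℝ => -(b * g b)) atBot (𝓝 (∫ t in Set.Iic (0:ℝ), h' t)) := by
    have := intervalIntegral_tendsto_integral_Iic (0:ℝ) hint.integrableOn tendsto_id
    have heq : ∀ a : ℝ, ∫ t in a..(0:ℝ), h' t = -(a * g a) := by
      intro a
      rw [intervalIntegral.integral_symm, hsub]
    simpa [heq] using this
  have hbot0 : (∫ t in Set.Iic (0:ℝ), h' t) = 0 := by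
    have hneg : Tendsto (fun b : ℝ => b * (fun s => g (-s)) b) atTop
        (𝓝 (∫ t in Set.Iic (0:ℝ), h' t)) := by
      have hcomp : Tendsto (fun b : ℝ => -(-b * g (-b))) atTop
          (𝓝 (∫ t in Set.Iic (0:ℝ), h' t)) := hbot.comp tendsto_neg_atTop_atBot
      refine hcomp.congr fun b => by ring
    have hgneg : Integrable (fun s : ℝ => g (-s)) := hg.comp_neg
    exact limit_zero_of_integrable_atTop hgneg hneg
  have : ∫ t, h' t = (∫ t in Set.Iic (0:ℝ), h' t) + ∫ t in Set.Ioi (0:ℝ), h' t :=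
    (intervalIntegral.integral_Iic_add_Ioi hint.integrableOn hint.integrableOn).symm
  calc ∫ t, (g t + t * g' t) = ∫ t, h' t := rfl
    _ = 0 := by rw [this, htop0, hbot0, add_zero]

lemma rpow_add_le_rpow_add_rpow {p : ℝ} (hp : 0 ≤ p) (hp1 : p ≤ 1) {a ε : ℝ}
    (ha : 0 ≤ a) (hε : 0 ≤ ε) : (a + ε)^p ≤ a^p + ε^p := by
  have h := NNReal.rpow_add_le_add_rpow (Real.toNNReal a) (Real.toNNReal ε) hp hp1
  calc (a+ε)^p = ((Real.toNNReal a + Real.toNNReal ε : ℝ≥0) : ℝ)^p := by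
        rw [NNReal.coe_add, Real.coe_toNNReal a ha, Real.coe_toNNReal ε hε]
    _ = (((Real.toNNReal a + Real.toNNReal ε : ℝ≥0) ^ p : ℝ≥0) : ℝ) :=
        (NNReal.coe_rpow _ _).symm
    _ ≤ ((Real.toNNReal a ^ p + Real.toNNReal ε ^ p : ℝ≥0) : ℝ) := NNReal.coe_le_coe.2 h
    _ = a^p + ε^p := by
        rw [NNReal.coe_add, NNReal.coe_rpow, NNReal.coe_rpow,
          Real.coe_toNNReal a ha, Real.coe_toNNReal ε hε]

lemma euclidean_coord_abs_le_norm {k : ℕ} (z : EuclideanSpace ℝ (Fin k)) (i : Fin k) :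
    |z i| ≤ ‖z‖ := by
  rw [EuclideanSpace.norm_eq]
  have h1 : |z i| = Real.sqrt (‖z i‖ ^ 2) := by
    rw [Real.sqrt_sq_eq_abs, abs_norm, Real.norm_eq_abs]
  rw [h1]
  exact Real.sqrt_le_sqrt (Finset.single_le_sum (fun j _ => sq_nonneg ‖z j‖)
    (Finset.mem_univ i))

lemma integral_coord_mul_fderiv (m : ℕ) (i : Fin (m+1))
    (W : (Fin (m+1) → ℝ) → ℝ) (W' : (Fin (m+1) → ℝ) → ((Fin (m+1) → ℝ) →L[ℝ] ℝ))
    (hd : ∀ x, HasFDerivAt W (W' x) x)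
    (hW : Integrable W)
    (hW' : Integrable (fun x => x i * W' x (Pi.single i 1))) :
    ∫ x, (W x + x i * W' x (Pi.single i 1)) = 0 := by
  set e := MeasurableEquiv.piFinSuccAbove (fun _ : Fin (m+1) => ℝ) i with he
  have hmp : MeasurePreserving e volume ((volume : Measure ℝ).prod volume) := by
    have := volume_preserving_piFinSuccAbove (fun _ : Fin (m+1) => ℝ) i
    exact this
  have hsymm : ∀ z : ℝ × (Fin m → ℝ), e.symm z = i.insertNth z.1 z.2 := by
    intro z; rfl
  set F : (Fin (m+1) → ℝ) → ℝ := fun x => W x + x i * W' x (Pi.single i 1) with hF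
  have hFi : Integrable F := hW.add hW'
  -- path derivative
  have hpath : ∀ (y : Fin m → ℝ) (t : ℝ),
      HasDerivAt (fun s : ℝ => (i.insertNth s y : Fin (m+1) → ℝ)) (Pi.single i 1) t := by
    intro y t
    have key : ∀ s : ℝ, (i.insertNth s y : Fin (m+1) → ℝ)
        = (i.insertNth (0:ℝ) y : Fin (m+1) → ℝ) + s • (Pi.single i 1 : Fin (m+1) → ℝ) := by
      intro s
      funext j
      refine Fin.succAboveCases i ?_ ?_ j
      · simp [Fin.insertNth_apply_same]
      · intro k
        simp [Fin.insertNth_apply_succAbove, Pi.single_eq_of_ne (Fin.succAbove_ne i k)]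
    have h2 : HasDerivAt (fun s : ℝ => (i.insertNth (0:ℝ) y : Fin (m+1) → ℝ) + s • (Pi.single i 1 : Fin (m+1) → ℝ))
        (Pi.single i 1) t := by
      simpa using ((hasDerivAt_id t).smul_const (Pi.single i 1 : Fin (m+1) → ℝ)).const_add
        (i.insertNth (0:ℝ) y)
    rw [funext key]
    exact h2
  have hmp2 : MeasurePreserving e.symm ((volume : Measure ℝ).prod volume) volume := hmp.symm
  have hemb := e.symm.measurableEmbedding
  have hFcomp : Integrable (fun z : ℝ × (Fin m → ℝ) => F (e.symm z))
      ((volume : Measure ℝ).prod volume) :=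
    (hmp2.integrable_comp_emb hemb).2 hFi
  have hWcomp : Integrable (fun z : ℝ × (Fin m → ℝ) => W (e.symm z))
      ((volume : Measure ℝ).prod volume) :=
    (hmp2.integrable_comp_emb hemb).2 hW
  have hW'comp : Integrable (fun z : ℝ × (Fin m → ℝ) => (e.symm z) i * W' (e.symm z) (Pi.single i 1))
      ((volume : Measure ℝ).prod volume) :=
    (hmp2.integrable_comp_emb hemb).2 hW'
  have hWsec := hWcomp.prod_left_ae
  have hW'sec := hW'comp.prod_left_ae
  have hinner : ∀ᵐ y : (Fin m → ℝ) ∂volume, (∫ t : ℝ, F (e.symm (t, y))) = 0 := by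
    filter_upwards [hWsec, hW'sec] with y hy1 hy2
    set g : ℝ → ℝ := fun t => W (i.insertNth t y) with hgdef
    set g' : ℝ → ℝ := fun t => W' (i.insertNth t y) (Pi.single i 1) with hg'def
    have hd' : ∀ t, HasDerivAt g (g' t) t := fun t =>
      (hd (i.insertNth t y)).comp_hasDerivAt t (hpath y t)
    have hg : Integrable g := by
      refine hy1.congr (Filter.Eventually.of_forall fun t => ?_)
      simp only [hsymm]
      rfl
    have hg' : Integrable (fun t => t * g' t) := by
      refine hy2.congr (Filter.Eventually.of_forall fun t => ?_)
      simp only [hsymm, hg'def, Fin.insertNth_apply_same]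
    have h0 := integral_add_mul_deriv_eq_zero hd' hg hg'
    rw [← h0]
    refine integral_congr_ae (Filter.Eventually.of_forall fun t => ?_)
    simp only [hsymm, hF, hgdef, hg'def, Fin.insertNth_apply_same]
  calc ∫ x, (W x + x i * W' x (Pi.single i 1)) = ∫ x, F x := rfl
    _ = ∫ z : ℝ × (Fin m → ℝ), F (e.symm z) ∂((volume : Measure ℝ).prod volume) :=
      (hmp2.integral_comp hemb F).symm
    _ = ∫ y : Fin m → ℝ, (∫ t : ℝ, F (e.symm (t, y))) := integral_prod_symm _ hFcomp
    _ = ∫ y : Fin m → ℝ, (0:ℝ) := integral_congr_ae hinner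
    _ = 0 := integral_zero _ _

lemma integral_fderiv_apply_self (m : ℕ)
    (w : EuclideanSpace ℝ (Fin (m+1)) → ℝ)
    (w' : EuclideanSpace ℝ (Fin (m+1)) → (EuclideanSpace ℝ (Fin (m+1)) →L[ℝ] ℝ))
    (hd : ∀ x, HasFDerivAt w (w' x) x)
    (hw : Integrable w)
    (hw' : Integrable (fun x => ‖x‖ * ‖w' x‖)) :
    (Integrable fun x => w' x x) ∧
      ∫ x, w' x x = -(((m:ℝ)+1)) * ∫ x, w x := by
  set ψ := PiLp.continuousLinearEquiv 2 ℝ (fun _ : Fin (m+1) => ℝ) with hψ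
  set φ := ψ.symm with hφ
  set e := (MeasurableEquiv.toLp 2 (Fin (m+1) → ℝ)).symm with hedef
  have hmp : MeasurePreserving e volume volume :=
    EuclideanSpace.volume_preserving_symm_measurableEquiv_toLp (Fin (m+1))
  have hmps : MeasurePreserving (⇑e.symm) volume volume := hmp.symm
  have hemb := e.symm.measurableEmbedding
  have hcoe : ∀ x : Fin (m+1) → ℝ, φ x = e.symm x := fun _ => rfl
  set W : (Fin (m+1) → ℝ) → ℝ := fun x => w (φ x) with hW
  set W' : (Fin (m+1) → ℝ) → ((Fin (m+1) → ℝ) →L[ℝ] ℝ) :=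
    fun x => (w' (φ x)).comp (φ : (Fin (m+1) → ℝ) →L[ℝ] EuclideanSpace ℝ (Fin (m+1))) with hW'
  have hdW : ∀ x, HasFDerivAt W (W' x) x := fun x =>
    (hd (φ x)).comp x φ.hasFDerivAt
  have hWint : Integrable W := by
    have := (hmps.integrable_comp_emb hemb).2 hw
    exact this.congr (Filter.Eventually.of_forall fun x => by
      simp only [Function.comp, hW, hcoe])
  have hdom : Integrable (fun x : Fin (m+1) → ℝ => ‖φ x‖ * ‖w' (φ x)‖) := by
    have := (hmps.integrable_comp_emb hemb).2 hw'
    exact this.congr (Filter.Eventually.of_forall fun x => by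
      simp only [Function.comp, hcoe])
  have hsingle : ∀ i : Fin (m+1), φ (Pi.single i 1) = EuclideanSpace.single i (1:ℝ) :=
    fun i => rfl
  have hbound : ∀ (i : Fin (m+1)) (x : Fin (m+1) → ℝ),
      ‖x i * W' x (Pi.single i 1)‖ ≤ ‖φ x‖ * ‖w' (φ x)‖ := by
    intro i x
    rw [norm_mul]
    have h1 : ‖x i‖ ≤ ‖φ x‖ := by
      have : (φ x) i = x i := rfl
      rw [Real.norm_eq_abs, ← this]
      exact euclidean_coord_abs_le_norm (φ x) i
    have h2 : ‖W' x (Pi.single i 1)‖ ≤ ‖w' (φ x)‖ := by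
      have : W' x (Pi.single i 1) = w' (φ x) (EuclideanSpace.single i (1:ℝ)) := by
        rw [hW']; rfl
      rw [this]
      calc ‖w' (φ x) (EuclideanSpace.single i (1:ℝ))‖
          ≤ ‖w' (φ x)‖ * ‖EuclideanSpace.single i (1:ℝ)‖ := ContinuousLinearMap.le_opNorm _ _
        _ = ‖w' (φ x)‖ := by rw [EuclideanSpace.norm_single, norm_one, mul_one]
    exact mul_le_mul h1 h2 (norm_nonneg _) (norm_nonneg _)
  have hW'i : ∀ i : Fin (m+1), Integrable (fun x => x i * W' x (Pi.single i 1)) := by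
    intro i
    refine Integrable.mono' hdom ?_ (Filter.Eventually.of_forall (hbound i))
    have hfe : (fun x => x i * W' x (Pi.single i 1))
        = fun x => x i * fderiv ℝ W x (Pi.single i 1) := by
      funext x; rw [(hdW x).fderiv]
    rw [hfe]
    exact ((measurable_pi_apply i).mul (measurable_fderiv_apply_const ℝ W _)).aestronglyMeasurable
  have hqi : ∀ i : Fin (m+1), ∫ x, x i * W' x (Pi.single i 1) = -∫ x, W x := by
    intro i
    have h0 := integral_coord_mul_fderiv m i W W' hdW hWint (hW'i i)
    rw [integral_add hWint (hW'i i)] at h0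
    linarith
  have hsum_fun : ∀ x : Fin (m+1) → ℝ,
      ∑ i, x i * W' x (Pi.single i 1) = W' x x := by
    intro x
    have h1 : ∀ i : Fin (m+1), x i * W' x (Pi.single i 1) = W' x (Pi.single i (x i)) := by
      intro i
      have hsm : (Pi.single i (x i) : Fin (m+1) → ℝ) = x i • (Pi.single i 1 : Fin (m+1) → ℝ) := by
        funext j
        rcases eq_or_ne j i with rfl | hji
        · simp
        · simp [Pi.single_eq_of_ne hji]
      rw [hsm, (W' x).map_smul, smul_eq_mul]
    simp_rw [h1]
    rw [← map_sum]
    congr 1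
    exact Finset.univ_sum_single x
  have hQint : Integrable (fun x : Fin (m+1) → ℝ => W' x x) := by
    have := integrable_finset_sum Finset.univ (fun i (_ : i ∈ Finset.univ) => hW'i i)
    exact this.congr (Filter.Eventually.of_forall fun x => hsum_fun x)
  have hQ : ∫ x, W' x x = -((m:ℝ)+1) * ∫ x, W x := by
    have h2 : ∫ x, ∑ i, x i * W' x (Pi.single i 1)
        = ∑ i : Fin (m+1), ∫ x, x i * W' x (Pi.single i 1) :=
      integral_finset_sum Finset.univ (fun i _ => hW'i i)
    have h3 : (∫ x, W' x x) = ∫ x, ∑ i, x i * W' x (Pi.single i 1) :=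
      integral_congr_ae (Filter.Eventually.of_forall fun x => (hsum_fun x).symm)
    rw [h3, h2]
    simp_rw [hqi]
    simp [Finset.card_univ]
    ring
  constructor
  · have h6 : Integrable ((fun y => w' y y) ∘ ⇑e.symm) := by
      refine hQint.congr (Filter.Eventually.of_forall fun x => ?_)
      simp only [Function.comp, hW']
      rw [hcoe]
      rfl
    exact (hmps.integrable_comp_emb hemb).1 h6
  · have h4 : ∫ y, w' y y = ∫ x, W' x x := by
      rw [← hmps.integral_comp hemb (fun y => w' y y)]
      exact integral_congr_ae (Filter.Eventually.of_forall fun x => by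
        simp only [hW', hcoe]; rfl)
    have h5 : ∫ y, w y = ∫ x, W x := by
      rw [← hmps.integral_comp hemb w]
      exact integral_congr_ae (Filter.Eventually.of_forall fun x => by
        simp only [hW, hcoe])
    rw [h4, h5, hQ]

set_option maxHeartbeats 1000000 in
theorem fisher_key
    (m : ℕ) (p : ℝ) (hp : 0 < p)
    (v : EuclideanSpace ℝ (Fin (m+1)) → ℝ)
    (hsmooth : ContDiff ℝ (⊤ : ℕ∞) v)
    (hnonneg : ∀ x, 0 ≤ v x)
    (hmom : Integrable fun x => ‖x‖ ^ 2 * v x)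
    (hvp : Integrable fun x => v x ^ p)
    (hfish : IntegrableOn (fun x => ‖gradient (fun y => v y ^ p) x‖ ^ 2 / v x)
      {x | 0 < v x}) :
    IntegrableOn (fun x => fderiv ℝ (fun y => v y ^ p) x x) {x | 0 < v x} ∧
    ∫ x in {x | 0 < v x}, fderiv ℝ (fun y => v y ^ p) x x
      = -((m:ℝ)+1) * ∫ x, v x ^ p := by
  set s : Set (EuclideanSpace ℝ (Fin (m+1))) := {x | 0 < v x} with hsdef
  have hsopen : IsOpen s := isOpen_lt continuous_const hsmooth.continuous
  have hs : MeasurableSet s := hsopen.measurableSet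
  set u : EuclideanSpace ℝ (Fin (m+1)) → ℝ := fun y => v y ^ p with hu
  set D : EuclideanSpace ℝ (Fin (m+1)) → ℝ := fun x => ‖gradient u x‖ with hD
  have hvd : ∀ x, HasFDerivAt v (fderiv ℝ v x) x := fun x =>
    (hsmooth.differentiable (by simp) x).hasFDerivAt
  have hv0 : ∀ x, v x = 0 → fderiv ℝ v x = 0 := by
    intro x hx
    have hmin : IsLocalMin v x :=
      Filter.Eventually.of_forall fun y => hx ▸ hnonneg y
    exact hmin.fderiv_eq_zero
  have hxns : ∀ x, x ∉ s → v x = 0 := fun x hx =>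
    le_antisymm (not_lt.1 hx) (hnonneg x)
  have hDf : ∀ x, D x = ‖fderiv ℝ u x‖ := by
    intro x
    rw [hD]
    exact LinearIsometryEquiv.norm_map _ _
  have hcont_fderiv : Continuous (fun x => fderiv ℝ v x) :=
    hsmooth.continuous_fderiv (by simp)
  -- AM-GM (c = 1)
  have hus : ∀ x ∈ s, HasFDerivAt u ((p * v x ^ (p-1)) • fderiv ℝ v x) x :=
    fun x hx => (hvd x).rpow_const (Or.inl (ne_of_gt hx))
  have hDseq : ∀ x ∈ s, D x = (p * v x ^ (p-1)) * ‖fderiv ℝ v x‖ := by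
    intro x hx
    have hv' : (0:ℝ) < v x := hx
    rw [hDf, (hus x hx).fderiv, norm_smul, Real.norm_eq_abs,
      abs_of_nonneg (by positivity : (0:ℝ) ≤ p * v x ^ (p-1))]
  have hAMGM : ∀ x ∈ s, ‖x‖ * D x ≤ (‖x‖^2 * v x + D x^2 / v x)/2 := by
    intro x hx
    have hv : 0 < v x := hx
    have hd2 : D x^2 / v x * v x = D x^2 := div_mul_cancel₀ _ hv.ne'
    have hDnn : 0 ≤ D x := norm_nonneg _
    have hxnn : 0 ≤ ‖x‖ := norm_nonneg _
    nlinarith [sq_nonneg (‖x‖ * v x - D x), mul_pos hv hv,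
      div_nonneg (sq_nonneg (D x)) hv.le]
  -- indicator bound
  set B : EuclideanSpace ℝ (Fin (m+1)) → ℝ :=
    s.indicator (fun x => (‖x‖^2 * v x + D x^2 / v x)/2) with hBdef
  have hBint : Integrable B := by
    refine IntegrableOn.integrable_indicator ?_ hs
    exact (hmom.integrableOn.add hfish).div_const 2
  have hBnn : ∀ x, 0 ≤ B x := by
    intro x
    rw [hBdef]
    refine Set.indicator_nonneg (fun y hy => ?_) x
    have hv : 0 < v y := hy
    positivity
  rcases le_or_gt 1 p with hp1 | hp1
  · -- p ≥ 1 : direct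
    set w' : EuclideanSpace ℝ (Fin (m+1)) → (EuclideanSpace ℝ (Fin (m+1)) →L[ℝ] ℝ) :=
      fun x => (p * v x ^ (p-1)) • fderiv ℝ v x with hw'def
    have hdw : ∀ x, HasFDerivAt u (w' x) x := fun x => (hvd x).rpow_const (Or.inr hp1)
    have hfd : ∀ x, fderiv ℝ u x = w' x := fun x => (hdw x).fderiv
    have hw'0 : ∀ x, x ∉ s → w' x = 0 := by
      intro x hx
      rw [hw'def]
      simp only [hv0 x (hxns x hx), smul_zero]
    have hw'norm : ∀ x, ‖x‖ * ‖w' x‖ ≤ B x := by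
      intro x
      by_cases hx : x ∈ s
      · have h1 : ‖w' x‖ = D x := by rw [hDf, hfd]
        rw [h1, hBdef, Set.indicator_of_mem hx]
        exact hAMGM x hx
      · rw [hw'0 x hx]
        simp only [norm_zero, mul_zero]
        exact hBnn x
    have hw'cont : Continuous (fun x => ‖x‖ * ‖w' x‖) := by
      have h1 : Continuous (fun x => v x ^ (p-1)) :=
        hsmooth.continuous.rpow_const (fun x => Or.inr (by linarith))
      exact continuous_norm.mul
        (((continuous_const.mul h1).smul hcont_fderiv).norm)
    have hw'int : Integrable (fun x => ‖x‖ * ‖w' x‖) := by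
      refine hBint.mono' hw'cont.aestronglyMeasurable
        (Filter.Eventually.of_forall fun x => ?_)
      rw [Real.norm_eq_abs, abs_of_nonneg (by positivity)]
      exact hw'norm x
    obtain ⟨hQint, hQ⟩ := integral_fderiv_apply_self m u w' hdw hvp hw'int
    have hfeq : (fun x => fderiv ℝ u x x) = fun x => w' x x := by
      funext x; rw [hfd]
    constructor
    · rw [hfeq]
      exact hQint.integrableOn
    · have hset : ∫ x in s, w' x x = ∫ x, w' x x :=
        setIntegral_eq_integral_of_forall_compl_eq_zero (fun x hx => by
          rw [hw'0 x hx]; rfl)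
      calc ∫ x in s, fderiv ℝ u x x = ∫ x in s, w' x x := by rw [hfeq]
        _ = ∫ x, w' x x := hset
        _ = -((m:ℝ)+1) * ∫ x, u x := hQ
  · -- p < 1 : regularize
    set εf : ℕ → ℝ := fun k => ((k:ℝ)+1)⁻¹ with hεf
    have hε : ∀ k : ℕ, (0:ℝ) < εf k := fun k => by positivity
    set wk : ℕ → EuclideanSpace ℝ (Fin (m+1)) → ℝ :=
      fun k x => (v x + εf k)^p - (εf k)^p with hwk
    set w'k : ℕ → EuclideanSpace ℝ (Fin (m+1)) →
        (EuclideanSpace ℝ (Fin (m+1)) →L[ℝ] ℝ) :=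
      fun k x => (p * (v x + εf k)^(p-1)) • fderiv ℝ v x with hw'k
    have hpos : ∀ k x, (0:ℝ) < v x + εf k := fun k x => by
      have := hnonneg x; have := hε k; linarith
    have hdk : ∀ k x, HasFDerivAt (wk k) (w'k k x) x := by
      intro k x
      have h1 : HasFDerivAt (fun y => v y + εf k) (fderiv ℝ v x) x := (hvd x).add_const _
      exact (h1.rpow_const (Or.inl (hpos k x).ne')).sub_const _
    have hwknn : ∀ k x, 0 ≤ wk k x := by
      intro k x
      rw [hwk]
      dsimp only
      rw [sub_nonneg]
      exact Real.rpow_le_rpow (hε k).le (by linarith [hnonneg x]) hp.le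
    have hwkle : ∀ k x, wk k x ≤ v x ^ p := by
      intro k x
      have := rpow_add_le_rpow_add_rpow hp.le hp1.le (hnonneg x) (hε k).le
      rw [hwk]
      dsimp only
      linarith
    have hwkcont : ∀ k, Continuous (wk k) := by
      intro k
      exact ((hsmooth.continuous.add continuous_const).rpow_const
        (fun x => Or.inl (hpos k x).ne')).sub continuous_const
    have hwkint : ∀ k, Integrable (wk k) := by
      intro k
      refine hvp.mono' (hwkcont k).aestronglyMeasurable (.of_forall fun x => ?_)
      rw [Real.norm_eq_abs, abs_of_nonneg (hwknn k x)]
      exact hwkle k x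
    have hw'k0 : ∀ (k : ℕ) x, x ∉ s → w'k k x = 0 := by
      intro k x hx
      rw [hw'k]
      simp only [hv0 x (hxns x hx), smul_zero]
    have hw'knorm : ∀ (k : ℕ) x, ‖x‖ * ‖w'k k x‖ ≤ B x := by
      intro k x
      by_cases hx : x ∈ s
      · have hv' : (0:ℝ) < v x := hx
        have h1 : ‖w'k k x‖ ≤ D x := by
          rw [hw'k]
          dsimp only
          rw [show ‖(p * (v x + εf k) ^ (p - 1)) • fderiv ℝ v x‖
              = |p * (v x + εf k) ^ (p - 1)| * ‖fderiv ℝ v x‖ by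
            rw [norm_smul, Real.norm_eq_abs]]
          rw [abs_of_nonneg (by positivity : (0:ℝ) ≤ p * (v x + εf k)^(p-1))]
          rw [hDseq x hx]
          have h2 : (v x + εf k)^(p-1) ≤ v x^(p-1) :=
            Real.rpow_le_rpow_of_nonpos hv' (by linarith [(hε k).le]) (by linarith)
          have h3 : (0:ℝ) ≤ ‖fderiv ℝ v x‖ := norm_nonneg _
          exact mul_le_mul_of_nonneg_right (mul_le_mul_of_nonneg_left h2 hp.le) h3
        calc ‖x‖ * ‖w'k k x‖ ≤ ‖x‖ * D x :=
              mul_le_mul_of_nonneg_left h1 (norm_nonneg x)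
          _ ≤ (‖x‖^2 * v x + D x^2 / v x)/2 := hAMGM x hx
          _ = B x := by rw [hBdef, Set.indicator_of_mem hx]
      · rw [hw'k0 k x hx]
        simp only [norm_zero, mul_zero]
        exact hBnn x
    have hcontk : ∀ k, Continuous (fun x => w'k k x) := by
      intro k
      exact (continuous_const.mul ((hsmooth.continuous.add continuous_const).rpow_const
        (fun x => Or.inl (hpos k x).ne'))).smul hcont_fderiv
    have happly : Continuous (fun q : (EuclideanSpace ℝ (Fin (m+1)) →L[ℝ] ℝ) ×
        EuclideanSpace ℝ (Fin (m+1)) => q.1 q.2) := isBoundedBilinearMap_apply.continuous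
    have hw'kint : ∀ k, Integrable (fun x => ‖x‖ * ‖w'k k x‖) := by
      intro k
      refine hBint.mono' (continuous_norm.mul (hcontk k).norm).aestronglyMeasurable
        (.of_forall fun x => ?_)
      rw [Real.norm_eq_abs, abs_of_nonneg (by positivity)]
      exact hw'knorm k x
    have mainK : ∀ k, ∫ x, w'k k x x = -((m:ℝ)+1) * ∫ x, wk k x := fun k =>
      (integral_fderiv_apply_self m (wk k) (w'k k) (hdk k) (hwkint k) (hw'kint k)).2
    have hFlim : Tendsto (fun k => ∫ x, w'k k x x) atTop
        (𝓝 (∫ x, s.indicator (fun y => fderiv ℝ u y y) x)) := by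
      refine tendsto_integral_of_dominated_convergence B ?_ hBint ?_ ?_
      · intro k
        exact (happly.comp ((hcontk k).prodMk continuous_id)).aestronglyMeasurable
      · intro k
        refine .of_forall fun x => ?_
        calc ‖w'k k x x‖ ≤ ‖w'k k x‖ * ‖x‖ := ContinuousLinearMap.le_opNorm _ _
          _ = ‖x‖ * ‖w'k k x‖ := mul_comm _ _
          _ ≤ B x := hw'knorm k x
      · refine .of_forall fun x => ?_
        by_cases hx : x ∈ s
        · rw [Set.indicator_of_mem hx]
          have hv' : (0:ℝ) < v x := hx
          have hfd2 : fderiv ℝ u x = (p * v x ^ (p-1)) • fderiv ℝ v x := (hus x hx).fderiv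
          have hbase : Tendsto (fun k : ℕ => v x + εf k) atTop (𝓝 (v x)) := by
            have h0 : Tendsto εf atTop (𝓝 0) := by
              have := tendsto_one_div_add_atTop_nhds_zero_nat (𝕜 := ℝ)
              simpa [hεf, one_div] using this
            simpa using (tendsto_const_nhds.add h0)
          have hrp : Tendsto (fun k => (v x + εf k)^(p-1)) atTop (𝓝 (v x ^ (p-1))) :=
            ((Real.continuousAt_rpow_const (v x) (p-1) (Or.inl hv'.ne')).tendsto).comp hbase
          have hT : Tendsto (fun k => (p * (v x + εf k)^(p-1)) * (fderiv ℝ v x x)) atTop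
              (𝓝 ((p * v x ^ (p-1)) * (fderiv ℝ v x x))) :=
            (tendsto_const_nhds.mul hrp).mul tendsto_const_nhds
          have heq1 : ∀ k : ℕ, w'k k x x = (p * (v x + εf k)^(p-1)) * (fderiv ℝ v x x) :=
            fun k => rfl
          have heq2 : fderiv ℝ u x x = (p * v x ^ (p-1)) * (fderiv ℝ v x x) := by
            rw [hfd2]; rfl
          rw [heq2]
          exact hT.congr (fun k => (heq1 k).symm)
        · rw [Set.indicator_of_notMem hx]
          have h0 : ∀ k : ℕ, w'k k x x = 0 := by
            intro k
            rw [hw'k0 k x hx]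
            rfl
          exact tendsto_const_nhds.congr (fun k => (h0 k).symm)
    have hGlim : Tendsto (fun k => ∫ x, wk k x) atTop (𝓝 (∫ x, u x)) := by
      refine tendsto_integral_of_dominated_convergence (fun x => v x ^ p) ?_ hvp ?_ ?_
      · intro k; exact (hwkcont k).aestronglyMeasurable
      · intro k
        refine .of_forall fun x => ?_
        rw [Real.norm_eq_abs, abs_of_nonneg (hwknn k x)]
        exact hwkle k x
      · refine .of_forall fun x => ?_
        have hbase : Tendsto (fun k : ℕ => v x + εf k) atTop (𝓝 (v x)) := by
          have h0 : Tendsto εf atTop (𝓝 0) := by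
            have := tendsto_one_div_add_atTop_nhds_zero_nat (𝕜 := ℝ)
            simpa [hεf, one_div] using this
          simpa using (tendsto_const_nhds.add h0)
        have h1 : Tendsto (fun k => (v x + εf k)^p) atTop (𝓝 (v x ^ p)) :=
          ((Real.continuousAt_rpow_const (v x) p (Or.inr hp.le)).tendsto).comp hbase
        have h0' : Tendsto εf atTop (𝓝 0) := by
          have := tendsto_one_div_add_atTop_nhds_zero_nat (𝕜 := ℝ)
          simpa [hεf, one_div] using this
        have h2 : Tendsto (fun k => (εf k)^p) atTop (𝓝 0) := by
          have h3 : Tendsto (fun k => (εf k)^p) atTop (𝓝 ((0:ℝ)^p)) :=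
            ((Real.continuousAt_rpow_const 0 p (Or.inr hp.le)).tendsto).comp h0'
          rwa [Real.zero_rpow hp.ne'] at h3
        have := h1.sub h2
        rw [sub_zero] at this
        exact this
    have combined : Tendsto (fun k => ∫ x, w'k k x x) atTop
        (𝓝 (-((m:ℝ)+1) * ∫ x, u x)) :=
      ((tendsto_const_nhds.mul hGlim)).congr (fun k => (mainK k).symm)
    have huniq : ∫ x, s.indicator (fun y => fderiv ℝ u y y) x
        = -((m:ℝ)+1) * ∫ x, u x := tendsto_nhds_unique hFlim combined
    have hind : ∫ x, s.indicator (fun y => fderiv ℝ u y y) x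
        = ∫ x in s, fderiv ℝ u x x := integral_indicator hs
    have hmeasq : AEStronglyMeasurable (fun x => fderiv ℝ u x x) (volume.restrict s) := by
      have h1 : Measurable (fun x => (fderiv ℝ u x, x)) :=
        (measurable_fderiv ℝ u).prodMk measurable_id
      exact ((happly.measurable.comp h1).aestronglyMeasurable).restrict
    have hkeyInt : IntegrableOn (fun x => fderiv ℝ u x x) s := by
      refine Integrable.mono' ((hmom.integrableOn.add hfish).div_const 2) hmeasq ?_
      refine (ae_restrict_iff' hs).2 (.of_forall fun x hx => ?_)
      calc ‖fderiv ℝ u x x‖ ≤ ‖fderiv ℝ u x‖ * ‖x‖ := ContinuousLinearMap.le_opNorm _ _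
        _ = ‖x‖ * D x := by rw [hDf x]; ring
        _ ≤ _ := hAMGM x hx
    exact ⟨hkeyInt, by rw [← hind]; exact huniq⟩

set_option maxHeartbeats 1000000

/-- **Lower bound for the generalized Fisher information.**
Let `n ≥ 1` and `p > 0`.  For every smooth probability density `v` on `ℝⁿ` with finite
positive second moment `E(v) = ∫|x|² v`, finite `∫ v^p > 0` and finite generalized
Fisher information, one has `I_p(v) − n² (∫ v^p)/E(v) ≥ 0`; equivalently,
`∫_{v>0} |∇(v^p)|²/v ≥ n² (∫ v^p)² / ∫ |x|² v`. -/
theorem fisherp_ge_moment_bound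
    (n : ℕ) (hn : 1 ≤ n) (p : ℝ) (hp : 0 < p)
    (v : EuclideanSpace ℝ (Fin n) → ℝ)
    (hsmooth : ContDiff ℝ (⊤ : ℕ∞) v)
    (hnonneg : ∀ x, 0 ≤ v x)
    (hvi : Integrable v) (hmass : (∫ x, v x) = 1)
    (hmom : Integrable fun x => ‖x‖ ^ 2 * v x) (hmompos : 0 < ∫ x, ‖x‖ ^ 2 * v x)
    (hvp : Integrable fun x => v x ^ p) (hvp0 : 0 < ∫ x, v x ^ p)
    (hfish : IntegrableOn (fun x => ‖gradient (fun y => v y ^ p) x‖ ^ 2 / v x)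
      {x | 0 < v x}) :
    0 ≤ fisherp n p v - (n : ℝ) ^ 2 * (∫ x, v x ^ p) / (∫ x, ‖x‖ ^ 2 * v x) ∧
      (n : ℝ) ^ 2 * (∫ x, v x ^ p) ^ 2 / (∫ x, ‖x‖ ^ 2 * v x) ≤
        ∫ x in {x | 0 < v x}, ‖gradient (fun y => v y ^ p) x‖ ^ 2 / v x := by
  obtain ⟨m, rfl⟩ : ∃ m, n = m + 1 := ⟨n - 1, (Nat.succ_pred_eq_of_pos hn).symm⟩
  obtain ⟨hkeyInt, hkey⟩ := fisher_key m p hp v hsmooth hnonneg hmom hvp hfish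
  set s : Set (EuclideanSpace ℝ (Fin (m+1))) := {x | 0 < v x} with hsdef
  have hsopen : IsOpen s := isOpen_lt continuous_const hsmooth.continuous
  have hs : MeasurableSet s := hsopen.measurableSet
  set u : EuclideanSpace ℝ (Fin (m+1)) → ℝ := fun y => v y ^ p with hu
  set D : EuclideanSpace ℝ (Fin (m+1)) → ℝ := fun x => ‖gradient u x‖ with hD
  have hDf : ∀ x, D x = ‖fderiv ℝ u x‖ := by
    intro x
    rw [hD]
    exact LinearIsometryEquiv.norm_map _ _
  set ME : ℝ := ∫ x, ‖x‖^2 * v x with hME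
  set Pint : ℝ := ∫ x, u x with hPint
  set Fint : ℝ := ∫ x in s, D x^2 / v x with hFint
  have hE : 0 < ME := hmompos
  have hP : 0 < Pint := hvp0
  set N : ℝ := ((m:ℝ)+1) * Pint with hNdef
  have hN : 0 < N := by positivity
  have hF0 : 0 ≤ Fint := setIntegral_nonneg hs fun x hx =>
    div_nonneg (sq_nonneg _) (le_of_lt hx)
  set c : ℝ := N / ME with hcdef
  have hc : 0 < c := div_pos hN hE
  -- pointwise bound on s
  have hptw : ∀ x ∈ s, ‖fderiv ℝ u x x‖ ≤
      (c * (‖x‖^2 * v x) + c⁻¹ * (D x^2 / v x))/2 := by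
    intro x hx
    have hv : 0 < v x := hx
    have h1 : ‖fderiv ℝ u x x‖ ≤ ‖x‖ * D x := by
      calc ‖fderiv ℝ u x x‖ ≤ ‖fderiv ℝ u x‖ * ‖x‖ := ContinuousLinearMap.le_opNorm _ _
        _ = ‖x‖ * D x := by rw [hDf x]; ring
    refine h1.trans ?_
    have hd2 : D x^2 / v x * v x = D x^2 := div_mul_cancel₀ _ hv.ne'
    have hcc : c * c⁻¹ = 1 := mul_inv_cancel₀ hc.ne'
    have hDnn : 0 ≤ D x := norm_nonneg _
    have hxnn : 0 ≤ ‖x‖ := norm_nonneg _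
    have hcinv : 0 < c⁻¹ := inv_pos.2 hc
    nlinarith [sq_nonneg (c * (‖x‖ * v x) - D x), mul_pos hc hv,
      mul_pos hcinv hv, sq_nonneg (‖x‖ * v x)]
  -- integral bound
  have hrhsInt : IntegrableOn
      (fun x => (c * (‖x‖^2 * v x) + c⁻¹ * (D x^2 / v x))/2) s := by
    exact ((hmom.integrableOn.const_mul c).add (hfish.const_mul c⁻¹)).div_const 2
  have hsetle : ∫ x in s, ‖x‖^2 * v x ≤ ME :=
    setIntegral_le_integral hmom (Filter.Eventually.of_forall fun x =>
      mul_nonneg (sq_nonneg _) (hnonneg x))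
  have hIneq : N ≤ (c * ME + c⁻¹ * Fint)/2 := by
    have e1 : |∫ x in s, fderiv ℝ u x x| = N := by
      rw [hkey, neg_mul, abs_neg, abs_of_nonneg (by positivity)]
    calc N = |∫ x in s, fderiv ℝ u x x| := e1.symm
      _ ≤ ∫ x in s, ‖fderiv ℝ u x x‖ := by
          rw [← Real.norm_eq_abs]
          exact norm_integral_le_integral_norm _
      _ ≤ ∫ x in s, (c * (‖x‖^2 * v x) + c⁻¹ * (D x^2 / v x))/2 :=
          setIntegral_mono_on hkeyInt.norm hrhsInt hs hptw
      _ = ((c * ∫ x in s, ‖x‖^2 * v x) + c⁻¹ * Fint)/2 := by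
          rw [integral_div, integral_add (hmom.integrableOn.const_mul c)
            (hfish.const_mul c⁻¹), integral_const_mul, integral_const_mul]
      _ ≤ (c * ME + c⁻¹ * Fint)/2 := by
          have := mul_le_mul_of_nonneg_left hsetle hc.le
          linarith
  have hNsq : N^2 ≤ ME * Fint := by
    have e2 : c * ME = N := div_mul_cancel₀ _ hE.ne'
    have e3 : c⁻¹ = ME / N := by
      rw [hcdef]
      rw [inv_div]
    rw [e2, e3] at hIneq
    have h4 : N ≤ ME / N * Fint := by linarith
    have h5 : N * N ≤ ME * Fint := by
      rw [div_mul_eq_mul_div] at h4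
      exact (le_div_iff₀ hN).1 h4
    nlinarith [h5]
  constructor
  · have hfish_ge : ((m:ℝ)+1)^2 * Pint / ME ≤ Pint⁻¹ * Fint := by
      have h6 : ((m:ℝ)+1)^2 * Pint^2 ≤ ME * Fint := by
        have : N^2 = ((m:ℝ)+1)^2 * Pint^2 := by rw [hNdef]; ring
        linarith [hNsq, this.symm.le, this.le]
      rw [div_le_iff₀ hE]
      rw [inv_mul_eq_div, div_mul_eq_mul_div, le_div_iff₀ hP]
      nlinarith [h6]
    have hfp : fisherp (m+1) p v = Pint⁻¹ * Fint := rfl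
    rw [sub_nonneg, hfp]
    push_cast
    exact le_trans (le_of_eq (by ring)) hfish_ge
  · have h6 : ((m:ℝ)+1)^2 * Pint^2 ≤ ME * Fint := by
      have : N^2 = ((m:ℝ)+1)^2 * Pint^2 := by rw [hNdef]; ring
      linarith [hNsq, this.le, this.symm.le]
    have : ((m:ℝ)+1)^2 * Pint^2 / ME ≤ Fint := by
      rw [div_le_iff₀ hE]
      nlinarith [h6]
    push_cast
    exact le_trans (le_of_eq (by ring)) this
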